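/- Let C be a cyclic code of length n over R = F_p[u,v]/⟨u^k, v², uv−vu⟩ with torsion polynomials g₁(x),…,g_{2k}(x) as above. For each 1 ≤ i ≤ 2k−1, the polynomial g_{i+1}(x) divides ((xⁿ−1)/g_i(x))·g_{ii}(x) in F_p[x], where g_{ii}(x) is the coefficient of u^i (resp. u^i v for i > k) in the i-th canonical generator A_i of C. -/

import Mathlib

open Polynomial

/-- The ring `F_p[u,v]/⟨u^k, v²⟩` (the variables commute, so `uv - vu = 0` is automatic). -/
abbrev Rbase (p k : ℕ) : Type :=
  MvPolynomial (Fin 2) (ZMod p) ⧸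
    Ideal.span {(MvPolynomial.X 0 : MvPolynomial (Fin 2) (ZMod p)) ^ k, MvPolynomial.X 1 ^ 2}

noncomputable instance instCommRingRbase (p k : ℕ) : CommRing (Rbase p k) :=
  Ideal.Quotient.commRing _

/-- The image of `u`. -/
noncomputable def uu (p k : ℕ) : Rbase p k := Ideal.Quotient.mk _ (MvPolynomial.X 0)

/-- The image of `v`. -/
noncomputable def vv (p k : ℕ) : Rbase p k := Ideal.Quotient.mk _ (MvPolynomial.X 1)

/-- `R_n = (F_p[u,v]/⟨u^k,v²⟩)[x]/⟨xⁿ−1⟩`, the ambient ring of cyclic codes of length `n`. -/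
abbrev Rn (p k n : ℕ) : Type :=
  Polynomial (Rbase p k) ⧸
    Ideal.span {(Polynomial.X : Polynomial (Rbase p k)) ^ n - 1}

noncomputable def uR (p k n : ℕ) : Rn p k n := Ideal.Quotient.mk _ (Polynomial.C (uu p k))
noncomputable def vR (p k n : ℕ) : Rn p k n := Ideal.Quotient.mk _ (Polynomial.C (vv p k))
noncomputable def xR (p k n : ℕ) : Rn p k n := Ideal.Quotient.mk _ Polynomial.X

/-- The canonical map `F_p[x] → R_n` (coefficientwise inclusion followed by the quotient map). -/
noncomputable def theta (p k n : ℕ) : Polynomial (ZMod p) →+* Rn p k n :=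
  (Ideal.Quotient.mk _).comp (Polynomial.mapRingHom (algebraMap (ZMod p) (Rbase p k)))

/-- The set of `f ∈ F_p[x]` representing elements of
`C_i = Tor Res … Res (C) = {f : u^{i-1}·f ∈ C mod ⟨u^i, v⟩}`. -/
def resTorSet (p k n : ℕ) (C : Ideal (Rn p k n)) (i : ℕ) : Set (Polynomial (ZMod p)) :=
  {f | uR p k n ^ (i - 1) * theta p k n f ∈
        C ⊔ Ideal.span {uR p k n ^ i, vR p k n}}

/-- The set of `f ∈ F_p[x]` representing elements of
`C_{k+i} = Tor Res … Res Tor (C) = {f : u^{i-1}·v·f ∈ C mod ⟨u^i v⟩}`. -/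
def torTorSet (p k n : ℕ) (C : Ideal (Rn p k n)) (i : ℕ) : Set (Polynomial (ZMod p)) :=
  {f | uR p k n ^ (i - 1) * vR p k n * theta p k n f ∈
        C ⊔ Ideal.span {uR p k n ^ i * vR p k n}}

/-- `g` is the (monic, minimal-degree) generator of the ideal of `F_p[x]/⟨xⁿ−1⟩` whose set
of polynomial representatives is `S`. -/
def IsMinGen (p n : ℕ) (S : Set (Polynomial (ZMod p))) (g : Polynomial (ZMod p)) : Prop :=
  g.Monic ∧
  S = {f | ∃ a b : Polynomial (ZMod p), f = g * a + (Polynomial.X ^ n - 1) * b} ∧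
  ∀ f ∈ S, f ≠ 0 → g.degree ≤ f.degree

/-- The canonical generator
`A_i = u^{i-1}g_i + u^i g_{ii} + ⋯ + u^{k-1}g_{i(k-1)} + v(g_{ik} + ⋯ + u^{k-1}g_{i(2k-1)})`
as a polynomial over `F_p[u,v]/⟨u^k,v²⟩`, for `1 ≤ i ≤ k`. -/
noncomputable def Apoly (p k : ℕ) (g : ℕ → Polynomial (ZMod p))
    (gg : ℕ → ℕ → Polynomial (ZMod p)) (i : ℕ) : Polynomial (Rbase p k) :=
  Polynomial.C (uu p k ^ (i - 1)) * (g i).map (algebraMap (ZMod p) (Rbase p k))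
    + ∑ j ∈ Finset.Icc i (k - 1),
        Polynomial.C (uu p k ^ j) * (gg i j).map (algebraMap (ZMod p) (Rbase p k))
    + Polynomial.C (vv p k) *
        ∑ j ∈ Finset.Icc k (2 * k - 1),
          Polynomial.C (uu p k ^ (j - k)) * (gg i j).map (algebraMap (ZMod p) (Rbase p k))

/-- The canonical generator
`A_{k+i} = v(u^{i-1}g_{k+i} + u^i g_{(k+i)(k+i)} + ⋯ + u^{k-1}g_{(k+i)(2k-1)})`
as a polynomial over `F_p[u,v]/⟨u^k,v²⟩`, for `1 ≤ i ≤ k`. -/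
noncomputable def AVpoly (p k : ℕ) (g : ℕ → Polynomial (ZMod p))
    (gg : ℕ → ℕ → Polynomial (ZMod p)) (i : ℕ) : Polynomial (Rbase p k) :=
  Polynomial.C (vv p k) *
    (Polynomial.C (uu p k ^ (i - 1)) * (g (k + i)).map (algebraMap (ZMod p) (Rbase p k))
      + ∑ j ∈ Finset.Icc (k + i) (2 * k - 1),
          Polynomial.C (uu p k ^ (j - k)) * (gg (k + i) j).map (algebraMap (ZMod p) (Rbase p k)))

/-- `A_i` as an element of `R_n`. -/
noncomputable def Aelt (p k n : ℕ) (g : ℕ → Polynomial (ZMod p))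
    (gg : ℕ → ℕ → Polynomial (ZMod p)) (i : ℕ) : Rn p k n :=
  Ideal.Quotient.mk _ (Apoly p k g gg i)

/-- `A_{k+i}` as an element of `R_n`. -/
noncomputable def AVelt (p k n : ℕ) (g : ℕ → Polynomial (ZMod p))
    (gg : ℕ → ℕ → Polynomial (ZMod p)) (i : ℕ) : Rn p k n :=
  Ideal.Quotient.mk _ (AVpoly p k g gg i)

/-- The minimum Hamming weight of a nonzero codeword of `C ⊆ R_n` (weights are computed
on the unique representative of degree `< n`). -/
noncomputable def dHam (p k n : ℕ) (C : Ideal (Rn p k n)) : ℕ :=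
  sInf {m | ∃ f : Polynomial (Rbase p k), f ≠ 0 ∧ f.degree < (n : ℕ) ∧
    Ideal.Quotient.mk (Ideal.span {(Polynomial.X : Polynomial (Rbase p k)) ^ n - 1}) f ∈ C ∧
    m = f.support.card}

/-- The minimum Hamming weight of a nonzero codeword of a cyclic code over `F_p` given by a
set `S` of polynomial representatives (closed under adding multiples of `xⁿ−1`). -/
noncomputable def dHamF (p n : ℕ) (S : Set (Polynomial (ZMod p))) : ℕ :=
  sInf {m | ∃ f : Polynomial (ZMod p), f ≠ 0 ∧ f.degree < (n : ℕ) ∧ f ∈ S ∧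
    m = f.support.card}

noncomputable instance instCommRingRn (p k n : ℕ) : CommRing (Rn p k n) :=
  Ideal.Quotient.commRing _

section Aux

variable {p k n : ℕ}

lemma minGen_dvd [Fact p.Prime] {S : Set (Polynomial (ZMod p))} {g : Polynomial (ZMod p)}
    (h : IsMinGen p n S g) : g ∣ (X ^ n - 1 : Polynomial (ZMod p)) := by
  obtain ⟨hm, hS, hmin⟩ := h
  have hr : (X ^ n - 1 : Polynomial (ZMod p)) %ₘ g ∈ S := by
    rw [hS]
    refine ⟨-((X ^ n - 1) /ₘ g), 1, ?_⟩
    have := Polynomial.modByMonic_add_div (X ^ n - 1 : Polynomial (ZMod p)) g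
    linear_combination this
  by_cases h0 : (X ^ n - 1 : Polynomial (ZMod p)) %ₘ g = 0
  · have := Polynomial.modByMonic_add_div (X ^ n - 1 : Polynomial (ZMod p)) g
    rw [h0, zero_add] at this
    exact ⟨_, this.symm⟩
  · exact absurd (hmin _ hr h0)
      (not_le.2 (Polynomial.degree_modByMonic_lt _ hm))

lemma minGen_dvd_mem [Fact p.Prime] {S : Set (Polynomial (ZMod p))} {g f : Polynomial (ZMod p)}
    (h : IsMinGen p n S g) (hf : f ∈ S) : g ∣ f := by
  obtain ⟨a, b, hab⟩ := h.2.1 ▸ hf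
  exact hab ▸ dvd_add (Dvd.intro a rfl) ((minGen_dvd h).mul_right b)

lemma theta_XnSubOne : theta p k n (X ^ n - 1) = 0 := by
  have : ((X : Polynomial (ZMod p)) ^ n - 1).map (algebraMap (ZMod p) (Rbase p k))
      = (X : Polynomial (Rbase p k)) ^ n - 1 := by
    simp [Polynomial.map_sub, Polynomial.map_pow]
  simp only [theta, RingHom.comp_apply, Polynomial.coe_mapRingHom, this]
  exact Ideal.Quotient.eq_zero_iff_mem.2 (Ideal.subset_span rfl)

lemma Aelt_eq (g : ℕ → Polynomial (ZMod p)) (gg : ℕ → ℕ → Polynomial (ZMod p)) (i : ℕ) :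
    Aelt p k n g gg i = uR p k n ^ (i - 1) * theta p k n (g i)
      + ∑ j ∈ Finset.Icc i (k - 1), uR p k n ^ j * theta p k n (gg i j)
      + vR p k n * ∑ j ∈ Finset.Icc k (2 * k - 1),
          uR p k n ^ (j - k) * theta p k n (gg i j) := by
  simp only [Aelt, Apoly, map_add, map_mul, map_sum, uR, vR, theta,
    RingHom.comp_apply, Polynomial.coe_mapRingHom, ← map_pow, ← Polynomial.C_pow]

lemma AVelt_eq (g : ℕ → Polynomial (ZMod p)) (gg : ℕ → ℕ → Polynomial (ZMod p)) (i : ℕ) :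
    AVelt p k n g gg i = vR p k n * (uR p k n ^ (i - 1) * theta p k n (g (k + i))
      + ∑ j ∈ Finset.Icc (k + i) (2 * k - 1),
          uR p k n ^ (j - k) * theta p k n (gg (k + i) j)) := by
  simp only [AVelt, AVpoly, map_add, map_mul, map_sum, uR, vR, theta,
    RingHom.comp_apply, Polynomial.coe_mapRingHom, ← map_pow, ← Polynomial.C_pow]


lemma expandA (g : ℕ → Polynomial (ZMod p)) (gg : ℕ → ℕ → Polynomial (ZMod p))
    (i : ℕ) (w : Polynomial (ZMod p)) (hw : g i * w = X ^ n - 1) :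
    theta p k n w * Aelt p k n g gg i =
      ∑ j ∈ Finset.Icc i (k - 1), uR p k n ^ j * theta p k n (gg i j * w)
        + vR p k n * ∑ j ∈ Finset.Icc k (2 * k - 1),
            uR p k n ^ (j - k) * theta p k n (gg i j * w) := by
  rw [Aelt_eq, mul_add, mul_add]
  have h0 : theta p k n w * (uR p k n ^ (i - 1) * theta p k n (g i)) = 0 := by
    rw [mul_comm, mul_assoc, ← map_mul, hw, theta_XnSubOne, mul_zero]
  rw [h0, zero_add]
  congr 1
  · rw [Finset.mul_sum]
    exact Finset.sum_congr rfl fun j _ => by rw [map_mul]; ring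
  · rw [mul_left_comm, Finset.mul_sum]
    congr 1
    exact Finset.sum_congr rfl fun j _ => by rw [map_mul]; ring

lemma expandAV (g : ℕ → Polynomial (ZMod p)) (gg : ℕ → ℕ → Polynomial (ZMod p))
    (i : ℕ) (w : Polynomial (ZMod p)) (hw : g (k + i) * w = X ^ n - 1) :
    theta p k n w * AVelt p k n g gg i =
      vR p k n * ∑ j ∈ Finset.Icc (k + i) (2 * k - 1),
          uR p k n ^ (j - k) * theta p k n (gg (k + i) j * w) := by
  rw [AVelt_eq, mul_left_comm, mul_add]
  have h0 : theta p k n w * (uR p k n ^ (i - 1) * theta p k n (g (k + i))) = 0 := by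
    rw [mul_comm, mul_assoc, ← map_mul, hw, theta_XnSubOne, mul_zero]
  rw [h0, zero_add, Finset.mul_sum]
  congr 1
  exact Finset.sum_congr rfl fun j _ => by rw [map_mul]; ring


lemma case1 (C : Ideal (Rn p k n)) (g : ℕ → Polynomial (ZMod p))
    (gg : ℕ → ℕ → Polynomial (ZMod p)) (i : ℕ) (hi1 : 1 ≤ i) (hik : i ≤ k - 1)
    (hAi : Aelt p k n g gg i ∈ C) (w : Polynomial (ZMod p))
    (hw : g i * w = X ^ n - 1) :
    w * gg i i ∈ resTorSet p k n C (i + 1) := by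
  have hsplit : Finset.Icc i (k - 1) = (Finset.Ioc i (k - 1)).cons i Finset.left_notMem_Ioc :=
    Finset.Icc_eq_cons_Ioc hik
  set I := Ideal.span {uR p k n ^ (i + 1), vR p k n} with hI
  have hu : uR p k n ^ (i + 1) ∈ I := Ideal.subset_span (Set.mem_insert _ _)
  have hv : vR p k n ∈ I := Ideal.subset_span (Set.mem_insert_of_mem _ rfl)
  have h1 : ∑ j ∈ Finset.Ioc i (k - 1), uR p k n ^ j * theta p k n (gg i j * w) ∈ I := by
    refine Ideal.sum_mem _ fun j hj => ?_
    obtain ⟨hj1, hj2⟩ := Finset.mem_Ioc.1 hj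
    have hp : uR p k n ^ j = uR p k n ^ (i + 1) * uR p k n ^ (j - (i + 1)) := by
      rw [← pow_add]; congr 1; omega
    rw [hp, mul_assoc]
    exact Ideal.mul_mem_right _ _ hu
  have h2 : vR p k n * ∑ j ∈ Finset.Icc k (2 * k - 1),
      uR p k n ^ (j - k) * theta p k n (gg i j * w) ∈ I :=
    Ideal.mul_mem_right _ _ hv
  have key : uR p k n ^ ((i + 1) - 1) * theta p k n (w * gg i i) =
      theta p k n w * Aelt p k n g gg i
        + (-(∑ j ∈ Finset.Ioc i (k - 1), uR p k n ^ j * theta p k n (gg i j * w)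
            + vR p k n * ∑ j ∈ Finset.Icc k (2 * k - 1),
                uR p k n ^ (j - k) * theta p k n (gg i j * w))) := by
    rw [expandA g gg i w hw, hsplit, Finset.sum_cons, mul_comm w (gg i i)]
    simp only [Nat.add_sub_cancel]
    ring
  rw [resTorSet, Set.mem_setOf_eq, key]
  exact Ideal.add_mem _ (Ideal.mem_sup_left (C.mul_mem_left _ hAi))
    (Ideal.mem_sup_right (neg_mem (add_mem h1 h2)))

lemma case2 (hk : 0 < k) (C : Ideal (Rn p k n)) (g : ℕ → Polynomial (ZMod p))
    (gg : ℕ → ℕ → Polynomial (ZMod p))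
    (hAk : Aelt p k n g gg k ∈ C) (w : Polynomial (ZMod p))
    (hw : g k * w = X ^ n - 1) :
    w * gg k k ∈ torTorSet p k n C 1 := by
  have hkk : k ≤ 2 * k - 1 := by omega
  have hsplit : Finset.Icc k (2 * k - 1) =
      (Finset.Ioc k (2 * k - 1)).cons k Finset.left_notMem_Ioc :=
    Finset.Icc_eq_cons_Ioc hkk
  have hempty : Finset.Icc k (k - 1) = ∅ := by
    rw [Finset.Icc_eq_empty_iff]; omega
  set I := Ideal.span {uR p k n ^ 1 * vR p k n} with hI
  have huv : uR p k n ^ 1 * vR p k n ∈ I := Ideal.subset_span rfl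
  have h1 : vR p k n * ∑ j ∈ Finset.Ioc k (2 * k - 1),
      uR p k n ^ (j - k) * theta p k n (gg k j * w) ∈ I := by
    rw [Finset.mul_sum]
    refine Ideal.sum_mem _ fun j hj => ?_
    obtain ⟨hj1, hj2⟩ := Finset.mem_Ioc.1 hj
    have hp : uR p k n ^ (j - k) = uR p k n ^ 1 * uR p k n ^ (j - k - 1) := by
      rw [← pow_add]; congr 1; omega
    have : vR p k n * (uR p k n ^ (j - k) * theta p k n (gg k j * w)) =
        (uR p k n ^ 1 * vR p k n) * (uR p k n ^ (j - k - 1) * theta p k n (gg k j * w)) := by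
      rw [hp]; ring
    rw [this]
    exact Ideal.mul_mem_right _ _ huv
  have key : uR p k n ^ (1 - 1) * vR p k n * theta p k n (w * gg k k) =
      theta p k n w * Aelt p k n g gg k
        + (-(vR p k n * ∑ j ∈ Finset.Ioc k (2 * k - 1),
            uR p k n ^ (j - k) * theta p k n (gg k j * w))) := by
    rw [expandA g gg k w hw, hempty, hsplit, Finset.sum_cons, mul_comm w (gg k k)]
    simp only [Finset.sum_empty, Nat.sub_self, pow_zero, zero_add]
    ring
  rw [torTorSet, Set.mem_setOf_eq, key]
  exact Ideal.add_mem _ (Ideal.mem_sup_left (C.mul_mem_left _ hAk))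
    (Ideal.mem_sup_right (neg_mem h1))

lemma case3 (C : Ideal (Rn p k n)) (g : ℕ → Polynomial (ZMod p))
    (gg : ℕ → ℕ → Polynomial (ZMod p)) (t : ℕ) (ht1 : 1 ≤ t) (htk : t ≤ k - 1)
    (hAVt : AVelt p k n g gg t ∈ C) (w : Polynomial (ZMod p))
    (hw : g (k + t) * w = X ^ n - 1) :
    w * gg (k + t) (k + t) ∈ torTorSet p k n C (t + 1) := by
  have hkk : k + t ≤ 2 * k - 1 := by omega
  have hsplit : Finset.Icc (k + t) (2 * k - 1) =
      (Finset.Ioc (k + t) (2 * k - 1)).cons (k + t) Finset.left_notMem_Ioc :=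
    Finset.Icc_eq_cons_Ioc hkk
  set I := Ideal.span {uR p k n ^ (t + 1) * vR p k n} with hI
  have huv : uR p k n ^ (t + 1) * vR p k n ∈ I := Ideal.subset_span rfl
  have h1 : vR p k n * ∑ j ∈ Finset.Ioc (k + t) (2 * k - 1),
      uR p k n ^ (j - k) * theta p k n (gg (k + t) j * w) ∈ I := by
    rw [Finset.mul_sum]
    refine Ideal.sum_mem _ fun j hj => ?_
    obtain ⟨hj1, hj2⟩ := Finset.mem_Ioc.1 hj
    have hp : uR p k n ^ (j - k) = uR p k n ^ (t + 1) * uR p k n ^ (j - k - (t + 1)) := by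
      rw [← pow_add]; congr 1; omega
    have : vR p k n * (uR p k n ^ (j - k) * theta p k n (gg (k + t) j * w)) =
        (uR p k n ^ (t + 1) * vR p k n)
          * (uR p k n ^ (j - k - (t + 1)) * theta p k n (gg (k + t) j * w)) := by
      rw [hp]; ring
    rw [this]
    exact Ideal.mul_mem_right _ _ huv
  have key : uR p k n ^ ((t + 1) - 1) * vR p k n * theta p k n (w * gg (k + t) (k + t)) =
      theta p k n w * AVelt p k n g gg t
        + (-(vR p k n * ∑ j ∈ Finset.Ioc (k + t) (2 * k - 1),
            uR p k n ^ (j - k) * theta p k n (gg (k + t) j * w))) := by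
    rw [expandAV g gg t w hw, hsplit, Finset.mul_sum, Finset.sum_cons,
      mul_comm w (gg (k + t) (k + t))]
    simp only [Nat.add_sub_cancel, Nat.add_sub_cancel_left]
    rw [Finset.mul_sum]
    ring
  rw [torTorSet, Set.mem_setOf_eq, key]
  exact Ideal.add_mem _ (Ideal.mem_sup_left (C.mul_mem_left _ hAVt))
    (Ideal.mem_sup_right (neg_mem h1))

end Aux

/-- for a cyclic code `C = ⟨A₁,…,A_{2k}⟩` with torsion polynomials
`g₁,…,g_{2k}` and canonical generators `A_i` (whose `u^i`- resp. `u^i v`-coefficients are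
the `g_{ii}`), for each `1 ≤ i ≤ 2k−1` one has `g_{i+1} ∣ ((xⁿ−1)/g_i)·g_{ii}` in `F_p[x]`
(stated via any `w` with `g_i · w = xⁿ − 1`). -/
theorem stmt7 (p k n : ℕ) [Fact p.Prime] (hk : 0 < k) (hn : 0 < n)
    (C : Ideal (Rn p k n)) (g : ℕ → Polynomial (ZMod p))
    (gg : ℕ → ℕ → Polynomial (ZMod p))
    (hres : ∀ i ∈ Finset.Icc 1 k, IsMinGen p n (resTorSet p k n C i) (g i))
    (htor : ∀ i ∈ Finset.Icc 1 k, IsMinGen p n (torTorSet p k n C i) (g (k + i)))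
    (hA : ∀ i ∈ Finset.Icc 1 k, Aelt p k n g gg i ∈ C)
    (hAV : ∀ i ∈ Finset.Icc 1 k, AVelt p k n g gg i ∈ C) :
    ∀ i ∈ Finset.Icc 1 (2 * k - 1), ∀ w : Polynomial (ZMod p),
      g i * w = Polynomial.X ^ n - 1 → g (i + 1) ∣ w * gg i i := by
  intro i hi w hw
  obtain ⟨hi1, hi2⟩ := Finset.mem_Icc.1 hi
  by_cases hik : i ≤ k - 1
  · have hmem := case1 C g gg i hi1 hik
      (hA i (Finset.mem_Icc.2 ⟨hi1, by omega⟩)) w hw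
    exact minGen_dvd_mem (hres (i + 1) (Finset.mem_Icc.2 ⟨by omega, by omega⟩)) hmem
  · by_cases hik2 : i = k
    · subst hik2
      have hmem := case2 hk C g gg (hA i (Finset.mem_Icc.2 ⟨hk, le_rfl⟩)) w hw
      exact minGen_dvd_mem (htor 1 (Finset.mem_Icc.2 ⟨le_rfl, hk⟩)) hmem
    · obtain ⟨t, rfl⟩ : ∃ t, i = k + t := ⟨i - k, by omega⟩
      have ht1 : 1 ≤ t := by omega
      have htk : t ≤ k - 1 := by omega
      have hmem := case3 C g gg t ht1 htk
        (hAV t (Finset.mem_Icc.2 ⟨ht1, by omega⟩)) w hw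
      have hgen := htor (t + 1) (Finset.mem_Icc.2 ⟨by omega, by omega⟩)
      have hkt : k + (t + 1) = k + t + 1 := by omega
      rw [hkt] at hgen
      exact minGen_dvd_mem hgen hmem
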